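/- Let X be a modular element of L_2(n,m;q) (i.e., dim(X ∧ Y) + dim(X ∨ Y) = dim X + dim Y for all Y in the lattice). If X contains a vector of rank 3, then X = (F_{q^m})^n. -/

import Mathlib

open Submodule

/-- The rank of a vector `v ∈ L^n`: the `Fq`-dimension of the `Fq`-span of its entries. -/
noncomputable def rkVec (Fq : Type*) {L : Type*} [Field Fq] [Field L] [Algebra Fq L]
    {n : ℕ} (v : Fin n → L) : ℕ :=
  Module.finrank Fq ↥(Submodule.span Fq (Set.range v))

/-- The rank-metric lattice `L_i(n,m;q)`: subspaces of `L^n` spanned by their vectors of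
rank at most `i`. -/
def RML (Fq L : Type*) [Field Fq] [Field L] [Algebra Fq L] (n i : ℕ) :
    Set (Submodule L (Fin n → L)) :=
  {X | X = Submodule.span L {x | x ∈ X ∧ rkVec Fq x ≤ i}}

/-- The meet in the rank-metric lattice: span of the rank-`≤ i` vectors of the intersection. -/
def rmlMeet (Fq : Type*) {L : Type*} [Field Fq] [Field L] [Algebra Fq L] {n : ℕ} (i : ℕ)
    (X Y : Submodule L (Fin n → L)) : Submodule L (Fin n → L) :=
  Submodule.span L {x | x ∈ X ⊓ Y ∧ rkVec Fq x ≤ i}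

/-- `X` is a modular element of the rank-metric lattice `L_i`. -/
def IsModularElt (Fq : Type*) {L : Type*} [Field Fq] [Field L] [Algebra Fq L] {n : ℕ} (i : ℕ)
    (X : Submodule L (Fin n → L)) : Prop :=
  ∀ Y ∈ RML Fq L n i,
    Module.finrank L ↥(rmlMeet Fq i X Y) + Module.finrank L ↥(X ⊔ Y)
      = Module.finrank L ↥X + Module.finrank L ↥Y

/-!
Write a rank-3 vector as `x = d₀ a₀ + d₁ a₁ + d₂ a₂` with `aₖ ∈ Fq^n`. For every `w ∈ Fq^n`,
`x = (d₀ (a₀ - w) + d₁ a₁) + (d₂ a₂ + d₀ w)` is a sum of two vectors of rank at most 2.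
Whenever a rank-3 vector `x = g₁ + g₂` of a modular element `X` splits in this way, `g₂ ∈ X`:
otherwise the rank-≤2 part of `X ∩ ⟨g₁, g₂⟩` is trivial (it lies on the line `L x`), so
modularity forces `dim (X + ⟨g₁, g₂⟩) = dim X + 2`, whereas `X + ⟨g₁, g₂⟩ = X + L g₂`.
Subtracting the cases `w` and `0` puts `d₀ w`, hence all of `Fq^n`, into `X`, and `Fq^n`
spans `L^n`.
-/

open Module

lemma Submodule.inf_span_pair_le_span_add {K V : Type*} [Field K] [AddCommGroup V]
    [Module K V] {X : Submodule K V} {g₁ g₂ : V} (hx : g₁ + g₂ ∈ X) (hg₂ : g₂ ∉ X) :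
    X ⊓ span K {g₁, g₂} ≤ span K {g₁ + g₂} := by
  rintro y ⟨hyX, hyY⟩
  obtain ⟨a, b, rfl⟩ := mem_span_pair.1 hyY
  obtain rfl : b = a := by
    by_contra hba
    have hdiff : (b - a) • g₂ ∈ X := by
      convert sub_mem hyX (X.smul_mem a hx) using 1
      module
    exact hg₂ ((X.smul_mem_iff (sub_ne_zero.2 hba)).1 hdiff)
  exact mem_span_singleton.2 ⟨b, smul_add b g₁ g₂⟩

section
variable {Fq L : Type*} [Field Fq] [Field L] [Algebra Fq L] {n i : ℕ}

lemma rkVec_zero : rkVec Fq (0 : Fin n → L) = 0 := by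
  rw [rkVec, span_eq_bot.2 (by rintro _ ⟨j, rfl⟩; rfl), finrank_bot]

lemma rkVec_smul {s : L} (hs : s ≠ 0) (v : Fin n → L) : rkVec Fq (s • v) = rkVec Fq v := by
  let e : L ≃ₗ[Fq] L := DistribMulAction.toLinearEquiv Fq L (Units.mk0 s hs)
  change finrank Fq (span Fq (Set.range (e ∘ v))) = _
  rw [Set.range_comp, ← LinearEquiv.coe_coe, span_image, LinearEquiv.finrank_map_eq]
  rfl

lemma rkVec_le_of_forall_mem_span {k : ℕ} (d : Fin k → L) {v : Fin n → L}
    (h : ∀ j, v j ∈ span Fq (Set.range d)) : rkVec Fq v ≤ k :=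
  have := FiniteDimensional.span_of_finite Fq (Set.finite_range d)
  (Submodule.finrank_mono (span_le.2 (Set.range_subset_iff.2 h))).trans
    ((finrank_range_le_card (R := Fq) d).trans_eq (Fintype.card_fin k))

lemma rkVec_smul_comp_add_smul_comp_le_two (a b : L) (u w : Fin n → Fq) :
    rkVec Fq (a • (algebraMap Fq L ∘ u) + b • (algebraMap Fq L ∘ w)) ≤ 2 := by
  refine rkVec_le_of_forall_mem_span ![a, b] fun j => ?_
  have hj : (a • (algebraMap Fq L ∘ u) + b • (algebraMap Fq L ∘ w)) j = u j • a + w j • b := by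
    simp [Algebra.smul_def, mul_comm]
  rw [hj]
  exact add_mem (smul_mem _ _ (subset_span ⟨0, rfl⟩)) (smul_mem _ _ (subset_span ⟨1, rfl⟩))

lemma exists_eq_sum_smul_of_rkVec_eq {k : ℕ} {v : Fin n → L} (hv : rkVec Fq v = k) :
    ∃ (d : Fin k → L) (c : Fin k → Fin n → Fq),
      (∀ l, d l ≠ 0) ∧ v = ∑ l, d l • (algebraMap Fq L ∘ c l) := by
  let V := span Fq (Set.range v)
  have : FiniteDimensional Fq V := FiniteDimensional.span_of_finite Fq (Set.finite_range v)
  let b := Module.finBasisOfFinrankEq Fq V hv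
  have hmem (j : Fin n) : v j ∈ V := subset_span ⟨j, rfl⟩
  refine ⟨fun l => b l, fun l j => b.repr ⟨v j, hmem j⟩ l, fun l => by simpa using b.ne_zero l, ?_⟩
  funext j
  refine (congrArg Subtype.val (b.sum_repr ⟨v j, hmem j⟩)).symm.trans ?_
  simp only [coe_sum, coe_smul, Finset.sum_apply, Pi.smul_apply, Function.comp_apply,
    smul_eq_mul, Algebra.smul_def (A := L), mul_comm]

lemma eq_top_of_forall_algebraMap_comp_mem {X : Submodule L (Fin n → L)}
    (h : ∀ w : Fin n → Fq, algebraMap Fq L ∘ w ∈ X) : X = ⊤ := by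
  classical
  rw [eq_top_iff, ← (Pi.basisFun L (Fin n)).span_eq, span_le]
  rintro _ ⟨j, rfl⟩
  have hj : Pi.basisFun L (Fin n) j = algebraMap Fq L ∘ Pi.single j 1 := by
    funext k
    simp [Pi.single_apply, apply_ite (algebraMap Fq L)]
  rw [hj]
  exact h _

lemma span_mem_RML {S : Set (Fin n → L)} (hS : ∀ v ∈ S, rkVec Fq v ≤ i) :
    span L S ∈ RML Fq L n i :=
  le_antisymm (span_mono fun v hv => ⟨subset_span hv, hS v hv⟩) (span_le.2 fun _ hv => hv.1)

lemma rmlMeet_eq_bot_of_inf_le_span_singleton {X Y : Submodule L (Fin n → L)} {x : Fin n → L}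
    (h : X ⊓ Y ≤ span L {x}) (hx : i < rkVec Fq x) : rmlMeet Fq i X Y = ⊥ := by
  refine span_eq_bot.2 fun y ⟨hy, hyr⟩ => ?_
  obtain ⟨a, rfl⟩ := mem_span_singleton.1 (h hy)
  by_contra ha
  rw [rkVec_smul (left_ne_zero_of_smul ha)] at hyr
  omega

theorem IsModularElt.mem_of_add_eq {X : Submodule L (Fin n → L)} (hmod : IsModularElt Fq i X)
    {x g₁ g₂ : Fin n → L} (hsum : g₁ + g₂ = x) (hx : x ∈ X) (hxr : i < rkVec Fq x)
    (h₁ : rkVec Fq g₁ ≤ i) (h₂ : rkVec Fq g₂ ≤ i) : g₂ ∈ X := by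
  subst hsum
  by_contra hg₂
  set Y := span L {g₁, g₂}
  have hx₀ : g₁ + g₂ ≠ 0 := by
    rintro h
    rw [h, rkVec_zero] at hxr
    omega
  have hmeet : rmlMeet Fq i X Y = ⊥ :=
    rmlMeet_eq_bot_of_inf_le_span_singleton (inf_span_pair_le_span_add hx hg₂) hxr
  have hjoin : X ⊔ Y ≤ X ⊔ span L {g₂} := by
    refine sup_le le_sup_left (span_le.2 ?_)
    rintro _ (rfl | rfl)
    · simpa using sub_mem (mem_sup_left hx) (mem_sup_right (mem_span_singleton_self g₂))
    · exact mem_sup_right (mem_span_singleton_self _)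
  have hY : span L {g₁ + g₂} < Y := by
    refine lt_of_le_of_ne ((span_singleton_le_iff_mem _ _).2 ?_) fun h => hg₂ ?_
    · exact add_mem (subset_span (by simp)) (subset_span (by simp))
    · exact (span_singleton_le_iff_mem _ _).2 hx (h ▸ subset_span (by simp))
  have hdimY : 1 < finrank L Y := by
    simpa [finrank_span_singleton hx₀] using finrank_lt_finrank_of_lt hY
  have hdimJoin : finrank L ↥(X ⊔ Y) ≤ finrank L X + 1 :=
    calc finrank L ↥(X ⊔ Y) ≤ finrank L ↥(X ⊔ span L {g₂}) := finrank_mono hjoin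
      _ ≤ finrank L X + finrank L (span L {g₂}) := finrank_add_le_finrank_add_finrank _ _
      _ ≤ finrank L X + 1 := by
        simpa using finrank_span_le_card (R := L) ({g₂} : Set (Fin n → L))
  have hmodY := hmod Y (span_mem_RML (by rintro _ (rfl | rfl) <;> assumption))
  rw [hmeet, finrank_bot] at hmodY
  omega

end

theorem modular_with_rank_three_eq_top_general (n : ℕ) (Fq L : Type) [Field Fq] [Field L] [Algebra Fq L]
    (X : Submodule L (Fin n → L)) (hmod : IsModularElt Fq 2 X)
    (x : Fin n → L) (hx : x ∈ X) (hxr : rkVec Fq x = 3) :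
    X = ⊤ := by
  obtain ⟨d, c, hd, rfl⟩ := exists_eq_sum_smul_of_rkVec_eq (Fq := Fq) hxr
  rw [Fin.sum_univ_three] at hx hxr
  have hsplit (w : Fin n → Fq) :
      d 2 • (algebraMap Fq L ∘ c 2) + d 0 • (algebraMap Fq L ∘ w) ∈ X :=
    hmod.mem_of_add_eq (g₁ := d 0 • (algebraMap Fq L ∘ (c 0 - w)) + d 1 • (algebraMap Fq L ∘ c 1))
      (by
        funext j
        simp only [map_comp_sub, Pi.add_apply, Pi.smul_apply, Pi.sub_apply, Function.comp_apply,
          smul_eq_mul]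
        ring)
      hx (by omega) (rkVec_smul_comp_add_smul_comp_le_two ..)
      (rkVec_smul_comp_add_smul_comp_le_two ..)
  refine eq_top_of_forall_algebraMap_comp_mem (Fq := Fq) fun w => (X.smul_mem_iff (hd 0)).1 ?_
  simpa using sub_mem (hsplit w) (hsplit 0)

theorem modular_with_rank_three_eq_top (q m n : ℕ) (hq : IsPrimePow q) (hn : 3 ≤ n)
    (hm : 3 ≤ m) (Fq L : Type) [Field Fq] [Field L] [Algebra Fq L] [Fintype Fq]
    (hcard : Fintype.card Fq = q) (hdim : Module.finrank Fq L = m)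
    (X : Submodule L (Fin n → L)) (hXmem : X ∈ RML Fq L n 2)
    (hmod : IsModularElt Fq 2 X)
    (x : Fin n → L) (hx : x ∈ X) (hxr : rkVec Fq x = 3) :
    X = ⊤ :=
  modular_with_rank_three_eq_top_general n Fq L X hmod x hx hxr
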